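/- Let (M, λ_i) be an AP-space on ℝⁿ with n ≥ 2. The tensor K^α_{μνσ} := (1/(n−1))(δ^α_μ ∂_σ C_ν − δ^α_μ ∂_ν C_σ) is conformally invariant: for every conformal change λ̄_i = e^{−ρ} λ_i with smooth ρ, the tensor K̄ built from the λ̄_i equals K. -/

import Mathlib

open scoped BigOperators

noncomputable section

/-- Kronecker delta as a real number. -/
def kron {n : ℕ} (α μ : Fin n) : ℝ := if α = μ then 1 else 0

/-- Partial derivative `∂_ν f` of a scalar function on ℝⁿ. -/
def pd {n : ℕ} (ν : Fin n) (f : (Fin n → ℝ) → ℝ) (x : Fin n → ℝ) : ℝ :=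
  fderiv ℝ f x (Pi.single ν 1)

/-- Weitzenböck connection `Γ^α_{μν} = Σ_i λ_i^α ∂_ν λ_{i,μ}`. -/
def Wconn {n : ℕ} (lam lamCov : Fin n → (Fin n → ℝ) → Fin n → ℝ)
    (α μ ν : Fin n) (x : Fin n → ℝ) : ℝ :=
  ∑ i, lam i x α * pd ν (fun y => lamCov i y μ) x

/-- Torsion `Λ^α_{μν}` of the Weitzenböck connection. -/
def tors {n : ℕ} (lam lamCov : Fin n → (Fin n → ℝ) → Fin n → ℝ)
    (α μ ν : Fin n) (x : Fin n → ℝ) : ℝ :=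
  Wconn lam lamCov α μ ν x - Wconn lam lamCov α ν μ x

/-- Contracted torsion (basic vector) `C_μ = Λ^ε_{εμ}`. -/
def Cvec {n : ℕ} (lam lamCov : Fin n → (Fin n → ℝ) → Fin n → ℝ)
    (μ : Fin n) (x : Fin n → ℝ) : ℝ :=
  ∑ ε, tors lam lamCov ε ε μ x

/-- Metric `g_{μν} = Σ_i λ_{i,μ} λ_{i,ν}`. -/
def gmet {n : ℕ} (lamCov : Fin n → (Fin n → ℝ) → Fin n → ℝ)
    (μ ν : Fin n) (x : Fin n → ℝ) : ℝ :=
  ∑ i, lamCov i x μ * lamCov i x ν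

/-- Inverse metric `g^{μν} = Σ_i λ_i^μ λ_i^ν`. -/
def ginv {n : ℕ} (lam : Fin n → (Fin n → ℝ) → Fin n → ℝ)
    (μ ν : Fin n) (x : Fin n → ℝ) : ℝ :=
  ∑ i, lam i x μ * lam i x ν

/-- Levi-Civita connection (Christoffel symbols) of the metric `g`. -/
def LC {n : ℕ} (lam lamCov : Fin n → (Fin n → ℝ) → Fin n → ℝ)
    (α μ ν : Fin n) (x : Fin n → ℝ) : ℝ :=
  (1/2) * ∑ ε, ginv lam α ε x *
    (pd μ (fun y => gmet lamCov ε ν y) x + pd ν (fun y => gmet lamCov ε μ y) x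
      - pd ε (fun y => gmet lamCov μ ν y) x)

/-- Curvature tensor `R[A]^α_{μνσ}` of connection coefficients `A`. -/
def curv {n : ℕ} (A : Fin n → Fin n → Fin n → (Fin n → ℝ) → ℝ)
    (α μ ν σ : Fin n) (x : Fin n → ℝ) : ℝ :=
  pd ν (A α μ σ) x - pd σ (A α μ ν) x
    + ∑ ε, A ε μ σ x * A α ε ν x - ∑ ε, A ε μ ν x * A α ε σ x

/-- Conformal change of the contravariant components: `λ̄_i^μ = e^{-ρ} λ_i^μ`. -/
def confLam {n : ℕ} (ρ : (Fin n → ℝ) → ℝ) (lam : Fin n → (Fin n → ℝ) → Fin n → ℝ) :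
    Fin n → (Fin n → ℝ) → Fin n → ℝ :=
  fun i x μ => Real.exp (-(ρ x)) * lam i x μ

/-- Conformal change of the covariant components: `λ̄_{i,μ} = e^{ρ} λ_{i,μ}`. -/
def confLamCov {n : ℕ} (ρ : (Fin n → ℝ) → ℝ) (lamCov : Fin n → (Fin n → ℝ) → Fin n → ℝ) :
    Fin n → (Fin n → ℝ) → Fin n → ℝ :=
  fun i x μ => Real.exp (ρ x) * lamCov i x μ

/-- `ρ^α := g^{αε} ρ_ε`. -/
def rhoUp {n : ℕ} (lam : Fin n → (Fin n → ℝ) → Fin n → ℝ) (ρ : (Fin n → ℝ) → ℝ)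
    (α : Fin n) (x : Fin n → ℝ) : ℝ :=
  ∑ ε, ginv lam α ε x * pd ε ρ x

/-- `ρ² := ρ^ε ρ_ε`. -/
def rhoSq {n : ℕ} (lam : Fin n → (Fin n → ℝ) → Fin n → ℝ) (ρ : (Fin n → ℝ) → ℝ)
    (x : Fin n → ℝ) : ℝ :=
  ∑ ε, rhoUp lam ρ ε x * pd ε ρ x

/-- Covariant derivative of a covector field: `X_{μ|ν} = ∂_ν X_μ − A^ε_{μν} X_ε`. -/
def covD {n : ℕ} (A : Fin n → Fin n → Fin n → (Fin n → ℝ) → ℝ)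
    (X : Fin n → (Fin n → ℝ) → ℝ) (μ ν : Fin n) (x : Fin n → ℝ) : ℝ :=
  pd ν (X μ) x - ∑ ε, A ε μ ν x * X ε x

/-- Covariant derivative of a vector field: `X^α_{|ν} = ∂_ν X^α + A^α_{εν} X^ε`. -/
def covDUp {n : ℕ} (A : Fin n → Fin n → Fin n → (Fin n → ℝ) → ℝ)
    (X : Fin n → (Fin n → ℝ) → ℝ) (α ν : Fin n) (x : Fin n → ℝ) : ℝ :=
  pd ν (X α) x + ∑ ε, A α ε ν x * X ε x

/-- Symmetric part `Γ̂^α_{μν}` of the Weitzenböck connection. -/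
def symW {n : ℕ} (lam lamCov : Fin n → (Fin n → ℝ) → Fin n → ℝ)
    (α μ ν : Fin n) (x : Fin n → ℝ) : ℝ :=
  (1/2) * (Wconn lam lamCov α μ ν x + Wconn lam lamCov α ν μ x)

/-- The conformally invariant tensor `T^α_{μν}`. -/
def Ttens {n : ℕ} (lam lamCov : Fin n → (Fin n → ℝ) → Fin n → ℝ)
    (α μ ν : Fin n) (x : Fin n → ℝ) : ℝ :=
  tors lam lamCov α μ ν x
    - ((n : ℝ) - 1)⁻¹ * (kron α μ * Cvec lam lamCov ν x - kron α ν * Cvec lam lamCov μ x)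

/-- The conformally invariant tensor `K^α_{μνσ}`. -/
def Ktens {n : ℕ} (lam lamCov : Fin n → (Fin n → ℝ) → Fin n → ℝ)
    (α μ ν σ : Fin n) (x : Fin n → ℝ) : ℝ :=
  ((n : ℝ) - 1)⁻¹ *
    (kron α μ * pd σ (Cvec lam lamCov ν) x - kron α μ * pd ν (Cvec lam lamCov σ) x)

/-- The conformal connection `𝚪^α_{μν} = Γ^α_{μν} − (1/(n−1)) δ^α_μ C_ν`. -/
def bConn {n : ℕ} (lam lamCov : Fin n → (Fin n → ℝ) → Fin n → ℝ)
    (α μ ν : Fin n) (x : Fin n → ℝ) : ℝ :=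
  Wconn lam lamCov α μ ν x - ((n : ℝ) - 1)⁻¹ * (kron α μ * Cvec lam lamCov ν x)

/-- The conformal connection `𝚪̂^α_{μν} = Γ̂^α_{μν} − (1/(2(n−1)))(δ^α_μ C_ν + δ^α_ν C_μ)`. -/
def hatConn {n : ℕ} (lam lamCov : Fin n → (Fin n → ℝ) → Fin n → ℝ)
    (α μ ν : Fin n) (x : Fin n → ℝ) : ℝ :=
  symW lam lamCov α μ ν x
    - (2 * ((n : ℝ) - 1))⁻¹ * (kron α μ * Cvec lam lamCov ν x + kron α ν * Cvec lam lamCov μ x)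

/-- `C_{μ ĥ|ν}`: covariant derivative of `C` with respect to `Γ̂`. -/
def Chat {n : ℕ} (lam lamCov : Fin n → (Fin n → ℝ) → Fin n → ℝ)
    (μ ν : Fin n) (x : Fin n → ℝ) : ℝ :=
  covD (symW lam lamCov) (Cvec lam lamCov) μ ν x

/-- The conformally invariant tensor `B^α_{μνσ}`. -/
def Btens {n : ℕ} (lam lamCov : Fin n → (Fin n → ℝ) → Fin n → ℝ)
    (α μ ν σ : Fin n) (x : Fin n → ℝ) : ℝ :=
  curv (symW lam lamCov) α μ ν σ x
    - (2 * ((n : ℝ) - 1))⁻¹ *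
      (kron α μ * pd ν (Cvec lam lamCov σ) x - kron α μ * pd σ (Cvec lam lamCov ν) x
        + kron α σ * Chat lam lamCov μ ν x - kron α ν * Chat lam lamCov μ σ x
        - (2 * ((n : ℝ) - 1))⁻¹ * kron α ν * Cvec lam lamCov μ x * Cvec lam lamCov σ x
        + (2 * ((n : ℝ) - 1))⁻¹ * kron α σ * Cvec lam lamCov μ x * Cvec lam lamCov ν x)

/-- `C^σ := g^{σε} C_ε`. -/
def Cup {n : ℕ} (lam lamCov : Fin n → (Fin n → ℝ) → Fin n → ℝ)
    (σ : Fin n) (x : Fin n → ℝ) : ℝ :=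
  ∑ ε, ginv lam σ ε x * Cvec lam lamCov ε x

/-- `C² := C_ε C^ε = g^{εη} C_ε C_η`. -/
def Csq {n : ℕ} (lam lamCov : Fin n → (Fin n → ℝ) → Fin n → ℝ)
    (x : Fin n → ℝ) : ℝ :=
  ∑ ε, Cvec lam lamCov ε x * Cup lam lamCov ε x

/-- The tensor `S_{μν} := ρ_{μ;ν} − ρ_μ ρ_ν − ½ g_{μν} ρ²`. -/
def Stens {n : ℕ} (lam lamCov : Fin n → (Fin n → ℝ) → Fin n → ℝ)
    (ρ : (Fin n → ℝ) → ℝ) (μ ν : Fin n) (x : Fin n → ℝ) : ℝ :=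
  covD (LC lam lamCov) (fun μ => pd μ ρ) μ ν x
    - pd μ ρ x * pd ν ρ x - (1/2) * gmet lamCov μ ν x * rhoSq lam ρ x

/-- The conformal connection `𝚪°^α_{μν} = Γ°^α_{μν} − (1/(n−1))(δ^α_μ C_ν + δ^α_ν C_μ − g_{μν} C^α)`. -/
def oConn {n : ℕ} (lam lamCov : Fin n → (Fin n → ℝ) → Fin n → ℝ)
    (α μ ν : Fin n) (x : Fin n → ℝ) : ℝ :=
  LC lam lamCov α μ ν x
    - ((n : ℝ) - 1)⁻¹ *
      (kron α μ * Cvec lam lamCov ν x + kron α ν * Cvec lam lamCov μ x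
        - gmet lamCov μ ν x * Cup lam lamCov α x)

end

section AuxLemmas

variable {n : ℕ}

lemma pd_smooth {f : (Fin n → ℝ) → ℝ} (hf : ContDiff ℝ (⊤ : ℕ∞) f) (ν : Fin n) :
    ContDiff ℝ (⊤ : ℕ∞) (pd ν f) := by
  have h1 : ContDiff ℝ (⊤ : ℕ∞) (fderiv ℝ f) := hf.fderiv_right (by simp)
  exact (ContinuousLinearMap.apply ℝ ℝ (Pi.single ν 1 : Fin n → ℝ)).contDiff.comp h1

lemma pd_mul {f g : (Fin n → ℝ) → ℝ} {x : Fin n → ℝ} (hf : DifferentiableAt ℝ f x)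
    (hg : DifferentiableAt ℝ g x) (ν : Fin n) :
    pd ν (fun y => f y * g y) x = pd ν f x * g x + f x * pd ν g x := by
  unfold pd
  rw [fderiv_fun_mul hf hg]
  simp only [ContinuousLinearMap.add_apply, ContinuousLinearMap.smul_apply, smul_eq_mul]
  ring

lemma pd_add {f g : (Fin n → ℝ) → ℝ} {x : Fin n → ℝ} (hf : DifferentiableAt ℝ f x)
    (hg : DifferentiableAt ℝ g x) (ν : Fin n) :
    pd ν (fun y => f y + g y) x = pd ν f x + pd ν g x := by
  unfold pd
  rw [fderiv_fun_add hf hg]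
  simp

lemma pd_const_mul {f : (Fin n → ℝ) → ℝ} {x : Fin n → ℝ} (hf : DifferentiableAt ℝ f x)
    (c : ℝ) (ν : Fin n) :
    pd ν (fun y => c * f y) x = c * pd ν f x := by
  unfold pd
  rw [fderiv_const_mul hf c]
  simp

lemma pd_exp {ρ : (Fin n → ℝ) → ℝ} (hρ : ContDiff ℝ (⊤ : ℕ∞) ρ) (ν : Fin n) (x : Fin n → ℝ) :
    pd ν (fun y => Real.exp (ρ y)) x = Real.exp (ρ x) * pd ν ρ x := by
  unfold pd
  rw [((hρ.differentiable (by simp) x).hasFDerivAt.exp).fderiv]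
  simp

lemma pd_comm {ρ : (Fin n → ℝ) → ℝ} (hρ : ContDiff ℝ (⊤ : ℕ∞) ρ) (ν σ : Fin n) (x : Fin n → ℝ) :
    pd σ (pd ν ρ) x = pd ν (pd σ ρ) x := by
  have hf' : ∀ y, HasFDerivAt ρ (fderiv ℝ ρ y) y := fun y =>
    (hρ.differentiable (by simp) y).hasFDerivAt
  have hdf : DifferentiableAt ℝ (fderiv ℝ ρ) x :=
    ((hρ.fderiv_right (m := (⊤ : ℕ∞)) (by simp)).differentiable (by simp)) x
  have hx : HasFDerivAt (fderiv ℝ ρ) (fderiv ℝ (fderiv ℝ ρ) x) x := hdf.hasFDerivAt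
  have hsymm := second_derivative_symmetric hf' hx
  have key : ∀ v w : Fin n → ℝ,
      fderiv ℝ (fun y => fderiv ℝ ρ y v) x w = fderiv ℝ (fderiv ℝ ρ) x w v := by
    intro v w
    have := ((ContinuousLinearMap.apply ℝ ℝ v).hasFDerivAt.comp x hx).fderiv
    rw [show (fun y => fderiv ℝ ρ y v) = (ContinuousLinearMap.apply ℝ ℝ v) ∘ fderiv ℝ ρ
      from rfl, this]
    rfl
  unfold pd
  rw [key, key, hsymm]

end AuxLemmas

theorem Ktens_conformally_invariant
    {n : ℕ} (hn : 2 ≤ n)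
    (lam lamCov : Fin n → (Fin n → ℝ) → Fin n → ℝ)
    (hlam : ∀ i μ, ContDiff ℝ (⊤ : ℕ∞) fun x => lam i x μ)
    (hlamCov : ∀ i μ, ContDiff ℝ (⊤ : ℕ∞) fun x => lamCov i x μ)
    (hinv : ∀ (x : Fin n → ℝ) (μ ν : Fin n), ∑ i, lam i x μ * lamCov i x ν = kron μ ν)
    (hinv' : ∀ (x : Fin n → ℝ) (i j : Fin n), ∑ μ, lam i x μ * lamCov j x μ = kron i j)
    :
    ∀ (ρ : (Fin n → ℝ) → ℝ), ContDiff ℝ (⊤ : ℕ∞) ρ →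
      ∀ (x : Fin n → ℝ) (α μ ν σ : Fin n),
        Ktens (confLam ρ lam) (confLamCov ρ lamCov) α μ ν σ x
          = Ktens lam lamCov α μ ν σ x := by
  intro ρ hρ x α μ ν σ
  have hρd : Differentiable ℝ ρ := hρ.differentiable (by simp)
  -- smoothness of Cvec
  have hWs : ∀ a b c : Fin n, ContDiff ℝ (⊤ : ℕ∞) (fun y => Wconn lam lamCov a b c y) := by
    intro a b c
    unfold Wconn
    exact ContDiff.sum fun i _ => (hlam i a).mul (pd_smooth (hlamCov i b) c)
  have hCs : ∀ c : Fin n, ContDiff ℝ (⊤ : ℕ∞) (Cvec lam lamCov c) := by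
    intro c
    unfold Cvec tors
    exact ContDiff.sum fun ε _ => (hWs ε ε c).sub (hWs ε c ε)
  -- transformation of the Weitzenböck connection
  have hW : ∀ (y : Fin n → ℝ) (a b c : Fin n),
      Wconn (confLam ρ lam) (confLamCov ρ lamCov) a b c y
        = Wconn lam lamCov a b c y + kron a b * pd c ρ y := by
    intro y a b c
    unfold Wconn confLam confLamCov
    have hterm : ∀ i : Fin n,
        Real.exp (-(ρ y)) * lam i y a * pd c (fun z => Real.exp (ρ z) * lamCov i z b) y
          = lam i y a * pd c (fun z => lamCov i z b) y
            + lam i y a * lamCov i y b * pd c ρ y := by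
      intro i
      rw [pd_mul ((hρd y).exp) ((hlamCov i b).differentiable (by simp) y) c, pd_exp hρ c y]
      rw [Real.exp_neg]
      have hne := Real.exp_ne_zero (ρ y)
      field_simp
      ring
    rw [Finset.sum_congr rfl fun i _ => hterm i, Finset.sum_add_distrib,
      ← Finset.sum_mul, hinv y a b]
  -- transformation of the contracted torsion
  have hC : ∀ (y : Fin n → ℝ) (c : Fin n),
      Cvec (confLam ρ lam) (confLamCov ρ lamCov) c y
        = Cvec lam lamCov c y + ((n : ℝ) - 1) * pd c ρ y := by
    intro y c
    unfold Cvec tors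
    rw [Finset.sum_congr rfl fun ε _ => by rw [hW y ε ε c, hW y ε c ε]]
    have h1 : (∑ ε : Fin n, (Wconn lam lamCov ε ε c y + kron ε ε * pd c ρ y
        - (Wconn lam lamCov ε c ε y + kron ε c * pd ε ρ y)))
        = (∑ ε : Fin n, (Wconn lam lamCov ε ε c y - Wconn lam lamCov ε c ε y))
          + (∑ ε : Fin n, kron ε ε * pd c ρ y)
          - (∑ ε : Fin n, kron ε c * pd ε ρ y) := by
      rw [← Finset.sum_add_distrib, ← Finset.sum_sub_distrib]
      exact Finset.sum_congr rfl fun ε _ => by ring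
    rw [h1]
    have h2 : (∑ ε : Fin n, kron ε ε * pd c ρ y) = (n : ℝ) * pd c ρ y := by
      simp [kron, Finset.sum_const, Finset.card_univ]
    have h3 : (∑ ε : Fin n, kron ε c * pd ε ρ y) = pd c ρ y := by
      simp [kron]
    rw [h2, h3]
    ring
  -- pd of transformed Cvec
  have hCfun : ∀ c : Fin n, Cvec (confLam ρ lam) (confLamCov ρ lamCov) c
      = fun y => Cvec lam lamCov c y + ((n : ℝ) - 1) * pd c ρ y :=
    fun c => funext fun y => hC y c
  have hpdC : ∀ a b : Fin n,
      pd a (Cvec (confLam ρ lam) (confLamCov ρ lamCov) b) x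
        = pd a (Cvec lam lamCov b) x + ((n : ℝ) - 1) * pd a (pd b ρ) x := by
    intro a b
    rw [hCfun b]
    rw [pd_add ((hCs b).differentiable (by simp) x)
      ((((pd_smooth hρ b)).differentiable (by simp) x).const_mul _) a]
    rw [pd_const_mul ((pd_smooth hρ b).differentiable (by simp) x) _ a]
  -- conclude
  unfold Ktens
  rw [hpdC σ ν, hpdC ν σ, pd_comm hρ ν σ x]
  ring
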